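/- arXiv:1301.0243 — 11 statements merged into one kernel-verified Lean document; each statement's English description precedes it below -/
import Mathlib

section
/- A point (x, y, z) ∈ ℝ³ satisfies x³ + y³ + z³ − 3xyz = 1 if and only if there exists a real number t > 0 such that x + y + z = t and (x − t/3)² + (y − t/3)² + (z − t/3)² = 2/(3t). In other words, S is the union over all t > 0 of the circles with center (t/3, t/3, t/3) and radius √(2/(3t)) lying in the plane x + y + z = t. -/
/-!
Writing `s = x + y + z` and `r² = (x - s/3)² + (y - s/3)² + (z - s/3)²` for the squared distance
from `(x, y, z)` to the axis `x = y = z`, one has the factorisation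
`x³ + y³ + z³ - 3xyz = s · (3/2) r²`. Since `r² ≥ 0`, this product equals `1` exactly when
`s > 0` and `r² = 2 / (3s)`.
-/

theorem cube_sum_sub_three_mul_eq {K : Type*} [Field K] [CharZero K] (x y z : K) :
    x^3 + y^3 + z^3 - 3*x*y*z =
      (x + y + z) * (3/2 * ((x - (x+y+z)/3)^2 + (y - (x+y+z)/3)^2 + (z - (x+y+z)/3)^2)) := by
  ring

theorem mul_eq_one_iff_of_nonneg_right {a b : ℝ} (hb : 0 ≤ b) :
    a * b = 1 ↔ 0 < a ∧ b = a⁻¹ := by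
  constructor
  · intro h
    have ha : 0 < a := pos_of_mul_pos_left (h ▸ one_pos) hb
    exact ⟨ha, eq_inv_of_mul_eq_one_right h⟩
  · rintro ⟨ha, rfl⟩
    exact mul_inv_cancel₀ ha.ne'

theorem stmt_2 (x y z : ℝ) :
    x^3 + y^3 + z^3 - 3*x*y*z = 1 ↔
      ∃ t : ℝ, 0 < t ∧ x + y + z = t ∧
        (x - t/3)^2 + (y - t/3)^2 + (z - t/3)^2 = 2/(3*t) := by
  have three_halves_eq_inv {r t : ℝ} (ht : 0 < t) : 3/2 * r = t⁻¹ ↔ r = 2/(3*t) := by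
    constructor <;> intro h <;> field_simp at h ⊢ <;> linarith
  rw [cube_sum_sub_three_mul_eq, mul_eq_one_iff_of_nonneg_right (by positivity)]
  constructor
  · rintro ⟨hs, hr⟩
    exact ⟨x + y + z, hs, rfl, (three_halves_eq_inv hs).1 hr⟩
  · rintro ⟨t, ht, rfl, hr⟩
    exact ⟨ht, (three_halves_eq_inv ht).2 hr⟩
end

section
/- For every real t > 0 and every real θ, the point (x(t,θ), y(t,θ), z(t,θ)) with x(t,θ) = t/3 + cos θ/(3√t) + sin θ/√(3t), y(t,θ) = t/3 + cos θ/(3√t) − sin θ/√(3t), z(t,θ) = t/3 − 2cos θ/(3√t) satisfies x³ + y³ + z³ − 3xyz = 1. -/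
/-!
The cubic form factors as `x³ + y³ + z³ - 3xyz = (x + y + z)(x² + y² + z² - xy - yz - zx)`.
On the point `(t/3, t/3, t/3) + r₁ cos θ + r₂ sin θ` the linear factor is `t`, while the
quadratic factor is `3/2` times the squared distance `2/(3t)` from the line `x = y = z`,
i.e. `1/t`.
-/

open Real

theorem cubic_form_axis_add_offset {R : Type*} [CommRing R] (c u v : R) :
    (c + u + v) ^ 3 + (c + u - v) ^ 3 + (c - 2 * u) ^ 3
      - 3 * (c + u + v) * (c + u - v) * (c - 2 * u) = 9 * c * (3 * u ^ 2 + v ^ 2) := by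
  ring

theorem three_mul_sq_cos_div_add_sq_sin_div {t : ℝ} (ht : 0 < t) (θ : ℝ) :
    3 * (cos θ / (3 * √t)) ^ 2 + (sin θ / √(3 * t)) ^ 2 = 1 / (3 * t) := by
  rw [div_pow, div_pow, mul_pow, sq_sqrt ht.le, sq_sqrt (by positivity)]
  field_simp
  linear_combination sin_sq_add_cos_sq θ

theorem stmt_4 (t θ : ℝ) (ht : 0 < t) :
    (t/3 + Real.cos θ/(3*Real.sqrt t) + Real.sin θ/Real.sqrt (3*t))^3
      + (t/3 + Real.cos θ/(3*Real.sqrt t) - Real.sin θ/Real.sqrt (3*t))^3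
      + (t/3 - 2*Real.cos θ/(3*Real.sqrt t))^3
      - 3 * (t/3 + Real.cos θ/(3*Real.sqrt t) + Real.sin θ/Real.sqrt (3*t))
          * (t/3 + Real.cos θ/(3*Real.sqrt t) - Real.sin θ/Real.sqrt (3*t))
          * (t/3 - 2*Real.cos θ/(3*Real.sqrt t)) = 1 := by
  rw [mul_div_assoc, cubic_form_axis_add_offset, three_mul_sq_cos_div_add_sq_sin_div ht]
  field_simp
  norm_num
end

section
/- Every point (x, y, z) ∈ ℝ³ satisfying x³ + y³ + z³ − 3xyz = 1 is of the form x = t/3 + cos θ/(3√t) + sin θ/√(3t), y = t/3 + cos θ/(3√t) − sin θ/√(3t), z = t/3 − 2cos θ/(3√t) for some real t > 0 and some θ with 0 ≤ θ < 2π; that is, the parametrization r(t,θ) covers all of S. -/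
/-!
Writing `t = x + y + z`, the cubic factors as `t · q` with
`4 q = (x + y - 2z)² + 3 (x - y)²`, a positive semidefinite form in the coordinates of the
plane orthogonal to `(1, 1, 1)`. On the surface `t · q = 1`, hence `t > 0` and the point
`(√t (x + y - 2z) / 2, √(3t) (x - y) / 2)` lies on the unit circle; its polar angle is `θ`.
-/

open Real

theorem exists_mem_Ico_cos_eq_sin_eq {c s : ℝ} (h : c ^ 2 + s ^ 2 = 1) :
    ∃ θ ∈ Set.Ico 0 (2 * π), cos θ = c ∧ sin θ = s := by
  set w : ℂ := ⟨c, s⟩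
  have hw : ‖w‖ = 1 := by
    rw [Complex.norm_def, Complex.normSq_mk, ← sq, ← sq, h, sqrt_one]
  have hw0 : w ≠ 0 := norm_ne_zero_iff.mp (hw ▸ one_ne_zero)
  refine ⟨toIcoMod two_pi_pos 0 w.arg, by simpa using toIcoMod_mem_Ico two_pi_pos 0 w.arg, ?_, ?_⟩
  · rw [← Angle.cos_coe, Angle.coe_toIcoMod, Angle.cos_coe, Complex.cos_arg hw0, hw, div_one]
  · rw [← Angle.sin_coe, Angle.coe_toIcoMod, Angle.sin_coe, Complex.sin_arg, hw, div_one]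

theorem sum_cubes_sub_three_mul_eq (x y z : ℝ) :
    x ^ 3 + y ^ 3 + z ^ 3 - 3 * x * y * z
      = (x + y + z) * (((x - y) ^ 2 + (y - z) ^ 2 + (z - x) ^ 2) / 2) := by
  ring

theorem add_add_pos_of_sum_cubes_sub_three_mul_eq_one {x y z : ℝ}
    (h : x ^ 3 + y ^ 3 + z ^ 3 - 3 * x * y * z = 1) : 0 < x + y + z := by
  rw [sum_cubes_sub_three_mul_eq] at h
  exact pos_of_mul_pos_left (h ▸ one_pos) (by positivity)

theorem stmt_5 (x y z : ℝ) (h : x^3 + y^3 + z^3 - 3*x*y*z = 1) :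
    ∃ t θ : ℝ, 0 < t ∧ 0 ≤ θ ∧ θ < 2*Real.pi ∧
      x = t/3 + Real.cos θ/(3*Real.sqrt t) + Real.sin θ/Real.sqrt (3*t) ∧
      y = t/3 + Real.cos θ/(3*Real.sqrt t) - Real.sin θ/Real.sqrt (3*t) ∧
      z = t/3 - 2*Real.cos θ/(3*Real.sqrt t) := by
  have ht : 0 < x + y + z := add_add_pos_of_sum_cubes_sub_three_mul_eq_one h
  have h3t : 0 < 3 * (x + y + z) := by positivity
  have hcircle : (√(x + y + z) * (x + y - 2 * z) / 2) ^ 2 + (√(3 * (x + y + z)) * (x - y) / 2) ^ 2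
      = 1 := by
    rw [div_pow, div_pow, mul_pow, mul_pow, sq_sqrt ht.le, sq_sqrt h3t.le]
    linear_combination h
  obtain ⟨θ, ⟨hθ₀, hθ₁⟩, hcos, hsin⟩ := exists_mem_Ico_cos_eq_sin_eq hcircle
  have hst : 0 < √(x + y + z) := sqrt_pos.mpr ht
  have hs3t : 0 < √(3 * (x + y + z)) := sqrt_pos.mpr h3t
  refine ⟨x + y + z, θ, ht, hθ₀, hθ₁, ?_, ?_, ?_⟩ <;>
  · simp only [hcos, hsin]
    field_simp
    ring
end

section
/- For a real number r, the set S_r = {(x,y,z) ∈ ℝ³ : x³ + y³ + z³ − r·xyz = 1} is invariant under every rotation of ℝ³ fixing the line x = y = z pointwise if and only if r = 3. In particular, for r ≠ 3 the surface S_r is not a surface of revolution with axis x = y = z. -/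
/-!
Write `s = x + y + z` and `q = x² + y² + z²`. The identity
`x³ + y³ + z³ - 3xyz = s (3q - s²) / 2` shows that for `r = 3` the cubic is a function of the
inner product with `(1, 1, 1)` and the squared norm, both of which are preserved by every
rotation fixing `(1, 1, 1)`. Conversely, the half-turn about the axis sends `(1, 0, 0) ∈ S_r` to
`(-1/3, 2/3, 2/3)`, which lies on `S_r` only when `15 + 4r = 27`.
-/

open Matrix

def cubicForm (r : ℝ) (v : Fin 3 → ℝ) : ℝ :=
  v 0 ^ 3 + v 1 ^ 3 + v 2 ^ 3 - r * (v 0 * v 1 * v 2)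

lemma cubicForm_three_eq (v : Fin 3 → ℝ) :
    cubicForm 3 v = (v ⬝ᵥ ![1, 1, 1]) * (3 * (v ⬝ᵥ v) - (v ⬝ᵥ ![1, 1, 1]) ^ 2) / 2 := by
  simp [cubicForm, dotProduct, Fin.sum_univ_three]
  ring

lemma dotProduct_mulVec_mulVec_of_transpose_mul_self {n : Type*} [Fintype n] [DecidableEq n]
    {R : Matrix n n ℝ} (hR : Rᵀ * R = 1) (v w : n → ℝ) :
    R *ᵥ v ⬝ᵥ R *ᵥ w = v ⬝ᵥ w := by
  rw [dotProduct_mulVec, ← mulVec_transpose, mulVec_mulVec, hR, one_mulVec]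

lemma cubicForm_three_mulVec {R : Matrix (Fin 3) (Fin 3) ℝ} (hR : Rᵀ * R = 1)
    (hfix : R *ᵥ ![1, 1, 1] = ![1, 1, 1]) (v : Fin 3 → ℝ) :
    cubicForm 3 (R *ᵥ v) = cubicForm 3 v := by
  have hsum := dotProduct_mulVec_mulVec_of_transpose_mul_self hR v ![1, 1, 1]
  rw [hfix] at hsum
  rw [cubicForm_three_eq, cubicForm_three_eq, hsum,
    dotProduct_mulVec_mulVec_of_transpose_mul_self hR]

lemma image_mulVec_levelSet_cubicForm_three {R : Matrix (Fin 3) (Fin 3) ℝ} (hR : Rᵀ * R = 1)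
    (hfix : R *ᵥ ![1, 1, 1] = ![1, 1, 1]) :
    (R *ᵥ ·) '' {v | cubicForm 3 v = 1} = {v | cubicForm 3 v = 1} := by
  have hsurj : Function.Surjective (R *ᵥ ·) := fun w =>
    ⟨Rᵀ *ᵥ w, by simp only [mulVec_mulVec, mul_eq_one_comm.mp hR, one_mulVec]⟩
  calc (R *ᵥ ·) '' {v | cubicForm 3 v = 1}
      = (R *ᵥ ·) '' ((R *ᵥ ·) ⁻¹' {v | cubicForm 3 v = 1}) := by
        simp only [Set.preimage_ofPred_eq, cubicForm_three_mulVec hR hfix]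
    _ = {v | cubicForm 3 v = 1} := Set.image_preimage_eq _ hsurj

/-- The half-turn about the axis `x = y = z`: `2P - 1`, where `P` is the orthogonal projection
onto `ℝ (1, 1, 1)`. -/
noncomputable def halfTurn : Matrix (Fin 3) (Fin 3) ℝ :=
  !![-1/3, 2/3, 2/3; 2/3, -1/3, 2/3; 2/3, 2/3, -1/3]

lemma halfTurn_transpose_mul_self : halfTurnᵀ * halfTurn = 1 := by
  ext i j
  fin_cases i <;> fin_cases j <;> simp [halfTurn, mul_apply, Fin.sum_univ_three] <;> norm_num

lemma det_halfTurn : halfTurn.det = 1 := by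
  simp [halfTurn, det_fin_three]
  norm_num

lemma halfTurn_mulVec_axis : halfTurn *ᵥ ![1, 1, 1] = ![1, 1, 1] := by
  ext i
  fin_cases i <;> simp [halfTurn, mulVec, dotProduct, Fin.sum_univ_three] <;> norm_num

lemma eq_three_of_cubicForm_halfTurn_mulVec {r : ℝ}
    (h : cubicForm r (halfTurn *ᵥ ![1, 0, 0]) = 1) : r = 3 := by
  simp [cubicForm, halfTurn, mulVec, dotProduct, Fin.sum_univ_three] at h
  linarith

theorem stmt_8 (r : ℝ) :
    (∀ R : Matrix (Fin 3) (Fin 3) ℝ, Rᵀ * R = 1 → R.det = 1 →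
        R.mulVec ![1, 1, 1] = ![1, 1, 1] →
        (fun v => R.mulVec v) ''
            {v : Fin 3 → ℝ | (v 0)^3 + (v 1)^3 + (v 2)^3 - r * (v 0 * v 1 * v 2) = 1}
          = {v : Fin 3 → ℝ | (v 0)^3 + (v 1)^3 + (v 2)^3 - r * (v 0 * v 1 * v 2) = 1})
      ↔ r = 3 := by
  constructor
  · intro h
    have hS := h halfTurn halfTurn_transpose_mul_self det_halfTurn halfTurn_mulVec_axis
    exact eq_three_of_cubicForm_halfTurn_mulVec (hS.subset (Set.mem_image_of_mem _ (by simp)))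
  · rintro rfl R hR - hfix
    exact image_mulVec_levelSet_cubicForm_three hR hfix
end

section
/- Let F(w,x,y,z) = x³ + y³ + z³ − 3xyz − w³ over ℂ, and let ε be a primitive complex cube root of unity. A nonzero point (w,x,y,z) ∈ ℂ⁴ satisfies F(w,x,y,z) = 0 together with the vanishing of all four partial derivatives F_w = F_x = F_y = F_z = 0 if and only if (w,x,y,z) is a nonzero scalar multiple of one of the three points (0,1,1,1), (0,1,ε,ε²), (0,1,ε²,ε). -/
/-!
At a singular point the partial derivatives give `w = 0` and `x² = yz`, `y² = xz`, `z² = xy`;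
the value `F = 0` then follows from Euler's relation. These three equations force `x ≠ 0`
(otherwise the point is zero), `y³ = y · xz = x · yz = x³`, so `y = ζ x` for a cube root of
unity `ζ ∈ {1, ε, ε²}`, and then `z = y² / x = ζ² x`. Conversely every point `(0, c, ζ c, ζ² c)`
with `ζ³ = 1` satisfies the three equations.
-/

theorem IsPrimitiveRoot.pow_three_eq_one_iff {R : Type*} [CommRing R] [IsDomain R] {ε ζ : R}
    (hε : IsPrimitiveRoot ε 3) : ζ ^ 3 = 1 ↔ ζ = 1 ∨ ζ = ε ∨ ζ = ε ^ 2 := by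
  constructor
  · intro hζ
    obtain ⟨i, hi, rfl⟩ := hε.eq_pow_of_pow_eq_one hζ
    interval_cases i <;> simp
  · rintro (rfl | rfl | rfl)
    · exact one_pow 3
    · exact hε.pow_eq_one
    · rw [← pow_mul, mul_comm, pow_mul, hε.pow_eq_one, one_pow]

section Field

variable {K : Type*} [Field K]

theorem sq_eq_mul_cyclic_iff {x y z : K} (hx : x ≠ 0) :
    (x ^ 2 = y * z ∧ y ^ 2 = x * z ∧ z ^ 2 = x * y) ↔
      ∃ ζ : K, ζ ^ 3 = 1 ∧ y = x * ζ ∧ z = x * ζ ^ 2 := by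
  constructor
  · rintro ⟨hx2, hy2, -⟩
    have hy3 : y ^ 3 = x ^ 3 := by linear_combination y * hy2 - x * hx2
    refine ⟨y / x, ?_, ?_, ?_⟩
    · rw [div_pow, hy3, div_self (pow_ne_zero 3 hx)]
    · field_simp
    · rw [div_pow, hy2]
      field_simp
  · rintro ⟨ζ, hζ, rfl, rfl⟩
    exact ⟨by linear_combination -x ^ 2 * hζ, by ring, by linear_combination x ^ 2 * ζ * hζ⟩

theorem IsPrimitiveRoot.exists_cube_root_iff {ε : K} (hε : IsPrimitiveRoot ε 3) (x y z : K) :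
    (∃ ζ : K, ζ ^ 3 = 1 ∧ y = x * ζ ∧ z = x * ζ ^ 2) ↔
      (y = x ∧ z = x) ∨ (y = x * ε ∧ z = x * ε ^ 2) ∨ (y = x * ε ^ 2 ∧ z = x * ε) := by
  have hε4 : (ε ^ 2) ^ 2 = ε := by linear_combination ε * hε.pow_eq_one
  constructor
  · rintro ⟨ζ, hζ, rfl, rfl⟩
    rcases hε.pow_three_eq_one_iff.1 hζ with rfl | rfl | rfl
    · simp
    · simp
    · simp [hε4]
  · rintro (⟨rfl, rfl⟩ | ⟨rfl, rfl⟩ | ⟨rfl, rfl⟩)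
    · exact ⟨1, by simp⟩
    · exact ⟨ε, hε.pow_eq_one, rfl, rfl⟩
    · exact ⟨ε ^ 2, hε.pow_three_eq_one_iff.2 (Or.inr (Or.inr rfl)), rfl, by rw [hε4]⟩

end Field

theorem singular_point_iff {𝕜 : Type*} [NontriviallyNormedField 𝕜] [NeZero (3 : 𝕜)]
    (w x y z : 𝕜) :
    (x^3 + y^3 + z^3 - 3*x*y*z - w^3 = 0 ∧
      deriv (fun w' => x^3 + y^3 + z^3 - 3*x*y*z - w'^3) w = 0 ∧
      deriv (fun x' => x'^3 + y^3 + z^3 - 3*x'*y*z - w^3) x = 0 ∧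
      deriv (fun y' => x^3 + y'^3 + z^3 - 3*x*y'*z - w^3) y = 0 ∧
      deriv (fun z' => x^3 + y^3 + z'^3 - 3*x*y*z' - w^3) z = 0) ↔
    w = 0 ∧ x ^ 2 = y * z ∧ y ^ 2 = x * z ∧ z ^ 2 = x * y := by
  have hFw : deriv (fun w' => x^3 + y^3 + z^3 - 3*x*y*z - w'^3) w = -(3 * w ^ 2) := by
    simp
  have hFx : deriv (fun x' => x'^3 + y^3 + z^3 - 3*x'*y*z - w^3) x = 3 * x ^ 2 - 3 * y * z := by
    simp (disch := fun_prop)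
  have hFy : deriv (fun y' => x^3 + y'^3 + z^3 - 3*x*y'*z - w^3) y = 3 * y ^ 2 - 3 * x * z := by
    simp (disch := fun_prop)
  have hFz : deriv (fun z' => x^3 + y^3 + z'^3 - 3*x*y*z' - w^3) z = 3 * z ^ 2 - 3 * x * y := by
    simp (disch := fun_prop)
  have h3 : (3 : 𝕜) ≠ 0 := three_ne_zero
  rw [hFw, hFx, hFy, hFz]
  constructor
  · rintro ⟨-, hw, hx, hy, hz⟩
    refine ⟨?_, ?_, ?_, ?_⟩
    · simpa [h3] using hw
    · exact mul_left_cancel₀ h3 (by linear_combination hx)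
    · exact mul_left_cancel₀ h3 (by linear_combination hy)
    · exact mul_left_cancel₀ h3 (by linear_combination hz)
  · rintro ⟨rfl, hx, hy, hz⟩
    exact ⟨by linear_combination x * hx + y * hy + z * hz, by simp, by linear_combination 3 * hx,
      by linear_combination 3 * hy, by linear_combination 3 * hz⟩

theorem stmt_9 (ε : ℂ) (hε : IsPrimitiveRoot ε 3)
    (w x y z : ℂ) (hp : (w, x, y, z) ≠ (0, 0, 0, 0)) :
    (x^3 + y^3 + z^3 - 3*x*y*z - w^3 = 0 ∧
      deriv (fun w' => x^3 + y^3 + z^3 - 3*x*y*z - w'^3) w = 0 ∧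
      deriv (fun x' => x'^3 + y^3 + z^3 - 3*x'*y*z - w^3) x = 0 ∧
      deriv (fun y' => x^3 + y'^3 + z^3 - 3*x*y'*z - w^3) y = 0 ∧
      deriv (fun z' => x^3 + y^3 + z'^3 - 3*x*y*z' - w^3) z = 0)
    ↔ ∃ c : ℂ, c ≠ 0 ∧
        ((w, x, y, z) = (0, c, c, c) ∨
         (w, x, y, z) = (0, c, c*ε, c*ε^2) ∨
         (w, x, y, z) = (0, c, c*ε^2, c*ε)) := by
  rw [singular_point_iff]
  constructor
  · rintro ⟨rfl, hsys⟩
    have hx : x ≠ 0 := by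
      rintro rfl
      obtain ⟨-, hy, hz⟩ := hsys
      simp_all
    refine ⟨x, hx, ?_⟩
    rcases (hε.exists_cube_root_iff x y z).1 ((sq_eq_mul_cyclic_iff hx).1 hsys) with
      ⟨rfl, rfl⟩ | ⟨rfl, rfl⟩ | ⟨rfl, rfl⟩ <;> simp
  · rintro ⟨c, hc, h⟩
    simp only [Prod.mk.injEq] at h
    rcases h with ⟨rfl, rfl, hy, hz⟩ | ⟨rfl, rfl, hy, hz⟩ | ⟨rfl, rfl, hy, hz⟩ <;>
      exact ⟨rfl, (sq_eq_mul_cyclic_iff hc).2 ((hε.exists_cube_root_iff x y z).2 (by simp [hy, hz]))⟩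
end

section
/- No affine line in ℝ³ is contained in the surface S = {(x,y,z) ∈ ℝ³ : x³ + y³ + z³ − 3xyz = 1}; that is, there do not exist a point p ∈ ℝ³ and a nonzero direction v ∈ ℝ³ such that p + s·v ∈ S for all s ∈ ℝ. -/
/-!
The cubic factors as `x³ + y³ + z³ - 3xyz = (x + y + z) · q(x, y, z)` with
`q = x² + y² + z² - xy - yz - zx = ((x - y)² + (y - z)² + (z - x)²) / 2`.
On a line `p + s • v` inside the surface the linear factor never vanishes, so it is constant:
the coordinate sum of `v` is `0`. Then `q` is constant along the line, and the parallelogram law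
for `q` forces `q v = 0`, i.e. `v` lies on the diagonal; a diagonal vector with coordinate
sum `0` is `0`.
-/

variable {K : Type*}

section CommRing

variable [CommRing K]

def coordSum (w : K × K × K) : K := w.1 + w.2.1 + w.2.2

def diagQuad (w : K × K × K) : K :=
  w.1 ^ 2 + w.2.1 ^ 2 + w.2.2 ^ 2 - w.1 * w.2.1 - w.2.1 * w.2.2 - w.2.2 * w.1

def cubicNorm (w : K × K × K) : K :=
  w.1 ^ 3 + w.2.1 ^ 3 + w.2.2 ^ 3 - 3 * w.1 * w.2.1 * w.2.2

theorem cubicNorm_eq_coordSum_mul_diagQuad (w : K × K × K) :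
    cubicNorm w = coordSum w * diagQuad w := by
  unfold cubicNorm coordSum diagQuad
  ring

theorem coordSum_add_smul (p v : K × K × K) (s : K) :
    coordSum (p + s • v) = coordSum p + s * coordSum v := by
  simp only [coordSum, Prod.fst_add, Prod.snd_add, Prod.smul_fst, Prod.smul_snd, smul_eq_mul]
  ring

theorem diagQuad_add_add_diagQuad_sub (p v : K × K × K) :
    diagQuad (p + v) + diagQuad (p - v) = 2 * (diagQuad p + diagQuad v) := by
  simp only [diagQuad, Prod.fst_add, Prod.snd_add, Prod.fst_sub, Prod.snd_sub]
  ring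

end CommRing

section Field

variable [Field K]

theorem coordSum_eq_zero_of_forall_cubicNorm_add_smul_eq_one {p v : K × K × K}
    (h : ∀ s : K, cubicNorm (p + s • v) = 1) : coordSum v = 0 := by
  by_contra hv
  have hzero : coordSum (p + (-coordSum p / coordSum v) • v) = 0 := by
    rw [coordSum_add_smul]
    field_simp
    ring
  have := h (-coordSum p / coordSum v)
  rw [cubicNorm_eq_coordSum_mul_diagQuad, hzero, zero_mul] at this
  exact zero_ne_one this

end Field

section LinearOrderedField

variable [Field K] [LinearOrder K] [IsStrictOrderedRing K]

theorem eq_zero_of_diagQuad_eq_zero_of_coordSum_eq_zero {v : K × K × K}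
    (hq : diagQuad v = 0) (hσ : coordSum v = 0) : v = 0 := by
  obtain ⟨a, b, c⟩ := v
  simp only [diagQuad, coordSum] at hq hσ
  have hab : a = b := by nlinarith [sq_nonneg (a - b), sq_nonneg (b - c), sq_nonneg (c - a)]
  have hbc : b = c := by nlinarith [sq_nonneg (a - b), sq_nonneg (b - c), sq_nonneg (c - a)]
  subst hab hbc
  have ha : a = 0 := by linarith
  simp [ha]

theorem eq_zero_of_forall_cubicNorm_add_smul_eq_one {p v : K × K × K}
    (h : ∀ s : K, cubicNorm (p + s • v) = 1) : v = 0 := by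
  have hσ := coordSum_eq_zero_of_forall_cubicNorm_add_smul_eq_one h
  have hline (s : K) : coordSum p * diagQuad (p + s • v) = 1 := by
    rw [← h s, cubicNorm_eq_coordSum_mul_diagQuad, coordSum_add_smul, hσ, mul_zero, add_zero]
  have h0 := hline 0
  have h1 := hline 1
  have hm1 := hline (-1)
  rw [zero_smul, add_zero] at h0
  rw [one_smul] at h1
  rw [neg_one_smul, ← sub_eq_add_neg] at hm1
  have hq : coordSum p * (2 * diagQuad v) = 0 := by
    linear_combination h1 + hm1 - 2 * h0 - coordSum p * diagQuad_add_add_diagQuad_sub p v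
  have hc : coordSum p ≠ 0 := left_ne_zero_of_mul_eq_one h0
  refine eq_zero_of_diagQuad_eq_zero_of_coordSum_eq_zero ?_ hσ
  simpa [hc] using hq

end LinearOrderedField

theorem stmt_12 :
    ¬ ∃ (p v : ℝ × ℝ × ℝ), v ≠ 0 ∧ ∀ s : ℝ,
      (p + s • v).1^3 + (p + s • v).2.1^3 + (p + s • v).2.2^3
        - 3 * (p + s • v).1 * (p + s • v).2.1 * (p + s • v).2.2 = 1 := by
  rintro ⟨p, v, hv, h⟩
  exact hv (eq_zero_of_forall_cubicNorm_add_smul_eq_one h)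
end

section
/- No affine line in ℂ³ is contained in the complex surface {(x,y,z) ∈ ℂ³ : x³ + y³ + z³ − 3xyz = 1}; that is, there do not exist p ∈ ℂ³ and a nonzero v ∈ ℂ³ with p + λ·v in the surface for all λ ∈ ℂ. -/
/-!
For a primitive cube root of unity `ω`, the cubic form `x³ + y³ + z³ - 3xyz` factors as the product
of the three linear forms `x + ζ y + ζ² z` with `ζ ∈ {1, ω, ω²}`. Along a line `p + t • v` inside the
surface each factor is an affine function of `t` that never vanishes, hence is constant; so all three
forms vanish at `v`, and since they are linearly independent (discrete Fourier transform of order 3),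
`v = 0`.
-/

variable {K : Type*} [Field K]

def dftForm (ζ : K) (u : K × K × K) : K := u.1 + ζ * u.2.1 + ζ ^ 2 * u.2.2

lemma dftForm_add_smul (ζ t : K) (p v : K × K × K) :
    dftForm ζ (p + t • v) = dftForm ζ p + t * dftForm ζ v := by
  simp only [dftForm, Prod.fst_add, Prod.snd_add, Prod.smul_fst, Prod.smul_snd, smul_eq_mul]
  ring

lemma IsPrimitiveRoot.sq_add_self_add_one {ω : K} (hω : IsPrimitiveRoot ω 3) :
    ω ^ 2 + ω + 1 = 0 := by
  have h := hω.geom_sum_eq_zero (by norm_num)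
  simp only [Finset.sum_range_succ, Finset.sum_range_zero] at h
  linear_combination h

lemma cubic_eq_prod_dftForm {ω : K} (hω : IsPrimitiveRoot ω 3) (u : K × K × K) :
    u.1 ^ 3 + u.2.1 ^ 3 + u.2.2 ^ 3 - 3 * u.1 * u.2.1 * u.2.2
      = dftForm 1 u * dftForm ω u * dftForm (ω ^ 2) u := by
  obtain ⟨x, y, z⟩ := u
  have h := hω.sq_add_self_add_one
  have c : ω ^ 3 - 1 = 0 := sub_eq_zero.2 hω.pow_eq_one
  simp only [dftForm]
  linear_combination -(x + y + z) * ((x * y + x * z + y * z) * h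
    + (y ^ 2 + (ω ^ 3 + 1) * z ^ 2 + ω * x * z + (ω ^ 2 + ω) * y * z) * c)

lemma eq_zero_of_forall_add_mul_ne_zero {a b : K} (h : ∀ t, a + t * b ≠ 0) : b = 0 := by
  by_contra hb
  exact h (-a / b) (by field_simp; ring)

lemma eq_zero_of_dftForm_eq_zero {ω : K} (hω : IsPrimitiveRoot ω 3) {v : K × K × K}
    (h₀ : dftForm 1 v = 0) (h₁ : dftForm ω v = 0) (h₂ : dftForm (ω ^ 2) v = 0) : v = 0 := by
  obtain ⟨x, y, z⟩ := v
  have h := hω.sq_add_self_add_one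
  have c : ω ^ 3 - 1 = 0 := sub_eq_zero.2 hω.pow_eq_one
  have h3 : (3 : K) ≠ 0 := by exact_mod_cast hω.neZero'.out
  simp only [dftForm] at h₀ h₁ h₂
  have hx : 3 * x = 0 := by linear_combination h₀ + h₁ + h₂ - (y + z) * h - z * ω * c
  have hy : 3 * y = 0 := by
    linear_combination h₀ + ω ^ 2 * h₁ + ω * h₂ - x * h - 2 * y * c - z * ((ω + ω ^ 2) * c + h)
  have hz : 3 * z = 0 := by
    linear_combination h₀ + ω * h₁ + ω ^ 2 * h₂ - x * h - y * (h + ω * c) - z * (ω ^ 3 + 2) * c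
  obtain rfl : x = 0 := (mul_eq_zero.1 hx).resolve_left h3
  obtain rfl : y = 0 := (mul_eq_zero.1 hy).resolve_left h3
  obtain rfl : z = 0 := (mul_eq_zero.1 hz).resolve_left h3
  rfl

theorem eq_zero_of_forall_cubic_add_smul_eq_one {ω : K} (hω : IsPrimitiveRoot ω 3)
    {p v : K × K × K}
    (h : ∀ t : K, (p + t • v).1 ^ 3 + (p + t • v).2.1 ^ 3 + (p + t • v).2.2 ^ 3
        - 3 * (p + t • v).1 * (p + t • v).2.1 * (p + t • v).2.2 = 1) : v = 0 := by
  have hline : ∀ t : K, (dftForm 1 p + t * dftForm 1 v) * (dftForm ω p + t * dftForm ω v)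
      * (dftForm (ω ^ 2) p + t * dftForm (ω ^ 2) v) = 1 := fun t => by
    simpa only [cubic_eq_prod_dftForm hω, dftForm_add_smul] using h t
  refine eq_zero_of_dftForm_eq_zero hω ?_ ?_ ?_
  · exact eq_zero_of_forall_add_mul_ne_zero fun t =>
      left_ne_zero_of_mul (left_ne_zero_of_mul_eq_one (hline t))
  · exact eq_zero_of_forall_add_mul_ne_zero fun t =>
      right_ne_zero_of_mul (left_ne_zero_of_mul_eq_one (hline t))
  · exact eq_zero_of_forall_add_mul_ne_zero fun t => right_ne_zero_of_mul_eq_one (hline t)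

theorem stmt_14 :
    ¬ ∃ (p v : ℂ × ℂ × ℂ), v ≠ 0 ∧ ∀ lam : ℂ,
      (p + lam • v).1^3 + (p + lam • v).2.1^3 + (p + lam • v).2.2^3
        - 3 * (p + lam • v).1 * (p + lam • v).2.1 * (p + lam • v).2.2 = 1 := by
  rintro ⟨p, v, hv, h⟩
  exact hv (eq_zero_of_forall_cubic_add_smul_eq_one (Complex.isPrimitiveRoot_exp 3 three_ne_zero) h)
end

section
/- Every projective line contained in the projective cubic surface {[w:x:y:z] ∈ ℙ³(ℂ) : x³ + y³ + z³ − 3xyz = w³} lies entirely in the plane at infinity w = 0; consequently the surface contains exactly three lines, namely {w = 0, x + y + z = 0}, {w = 0, x + εy + ε²z = 0}, and {w = 0, x + ε²y + εz = 0}, where ε is a primitive cube root of unity. -/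
/-!
The form `x³ + y³ + z³ - 3xyz` is the product of `ℓₖ = x + εᵏy + ε²ᵏz`, `k = 0, 1, 2`, and
`w, ℓ₀, ℓ₁, ℓ₂` are linearly independent. A 2-plane `L` in the cone meets `w = 0` in some `r ≠ 0`,
so `ℓₖ(r) ≠ 0` for some `k`. Moving any `p ∈ L` along `r` keeps `w(p)` and reaches a zero of `ℓₖ`,
whence `w(p)³ = ℓ₀ℓ₁ℓ₂ = 0`. Thus `ℓ₀ℓ₁ℓ₂` vanishes on `L`; as a vector space over an infinite
field is not a union of three proper subspaces, `L ⊆ ker ℓₖ` for some `k`, and `L` is the plane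
`w = ℓₖ = 0` by dimension.
-/

open Module LinearMap

section LinearForms

variable {K V ι : Type*} [Field K] [AddCommGroup V] [Module K V]

theorem Submodule.exists_mem_ne_zero_apply_eq_zero {L : Submodule K V} (hL : 1 < finrank K L)
    (g : V →ₗ[K] K) : ∃ r ∈ L, r ≠ 0 ∧ g r = 0 := by
  have : FiniteDimensional K L := Module.finite_of_finrank_pos (by omega)
  obtain ⟨r, hr, hr0⟩ := Submodule.exists_mem_ne_zero_of_ne_bot
    ((g.domRestrict L).ker_ne_bot_of_finrank_lt (by rwa [finrank_self]))
  exact ⟨r, r.2, by simpa using hr0, hr⟩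

theorem Submodule.apply_eq_zero_of_prod_eq_pow [Fintype ι] {L : Submodule K V}
    {f : ι → V →ₗ[K] K} {g : V →ₗ[K] K} {n : ℕ} (hn : n ≠ 0)
    (h : ∀ v ∈ L, ∏ i, f i v = g v ^ n) {r : V} (hrL : r ∈ L) (hr : g r = 0) {i : ι}
    (hi : f i r ≠ 0) {v : V} (hv : v ∈ L) : g v = 0 := by
  set s := v - (f i v / f i r) • r
  have hfs : f i s = 0 := by simp [s, div_mul_cancel₀ _ hi]
  have hgs : g s = g v := by simp [s, hr]
  rw [← hgs, ← pow_eq_zero_iff hn, ← h s (L.sub_mem hv (L.smul_mem _ hrL))]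
  exact Finset.prod_eq_zero (Finset.mem_univ i) hfs

theorem Submodule.exists_le_ker_of_prod_eq_zero [Infinite K] [Fintype ι] {L : Submodule K V}
    {f : ι → V →ₗ[K] K} (h : ∀ v ∈ L, ∏ i, f i v = 0) : ∃ i, L ≤ ker (f i) := by
  have hcover : ⋃ i, ((ker (f i)).comap L.subtype : Set L) = Set.univ := by
    refine Set.eq_univ_of_forall fun v => Set.mem_iUnion.mpr ?_
    obtain ⟨i, -, hi⟩ := Finset.prod_eq_zero_iff.mp (h v v.2)
    exact ⟨i, hi⟩
  obtain ⟨i, hi⟩ := Subspace.exists_eq_top_of_iUnion_eq_univ hcover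
  exact ⟨i, Submodule.comap_subtype_eq_top.mp hi⟩

end LinearForms

theorem IsPrimitiveRoot.sq_add_self_add_one_s16 {R : Type*} [CommRing R] [IsDomain R] {ζ : R}
    (h : IsPrimitiveRoot ζ 3) : ζ ^ 2 + ζ + 1 = 0 := by
  have h3 := h.geom_sum_eq_zero (by norm_num)
  simp only [Finset.sum_range_succ, Finset.sum_range_zero] at h3
  linear_combination h3

section CubicSurface

variable {K : Type*} [Field K]

def cubicSurface : Set (Fin 4 → K) :=
  {p | p 1 ^ 3 + p 2 ^ 3 + p 3 ^ 3 - 3 * (p 1 * p 2 * p 3) = p 0 ^ 3}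

def linearForm (a b : K) : (Fin 4 → K) →ₗ[K] K := proj 1 + a • proj 2 + b • proj 3

@[simp]
theorem linearForm_apply (a b : K) (p : Fin 4 → K) :
    linearForm a b p = p 1 + a * p 2 + b * p 3 := rfl

def lineAtInfinity (ℓ : (Fin 4 → K) →ₗ[K] K) : Submodule K (Fin 4 → K) :=
  ker (proj 0) ⊓ ker ℓ

theorem coe_lineAtInfinity_linearForm (a b : K) :
    (lineAtInfinity (linearForm a b) : Set (Fin 4 → K)) =
      {p | p 0 = 0 ∧ p 1 + a * p 2 + b * p 3 = 0} := by
  ext p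
  simp [lineAtInfinity]

theorem finrank_lineAtInfinity_linearForm (a b : K) :
    finrank K (lineAtInfinity (linearForm a b)) = 2 := by
  have hsurj : Function.Surjective ((proj 0).prod (linearForm a b)) := fun x =>
    ⟨![x.1, x.2, 0, 0], by simp⟩
  have h := finrank_range_add_finrank_ker ((proj 0).prod (linearForm a b))
  rw [range_eq_top.mpr hsurj, finrank_top, ker_prod] at h
  simp only [finrank_prod, finrank_self, finrank_fin_fun] at h
  rw [lineAtInfinity]
  omega

def cubicFactors (ε : K) : Fin 3 → (Fin 4 → K) →ₗ[K] K :=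
  ![linearForm 1 1, linearForm ε (ε ^ 2), linearForm (ε ^ 2) ε]

variable {ε : K}

theorem prod_cubicFactors (hε : IsPrimitiveRoot ε 3) (p : Fin 4 → K) :
    ∏ i, cubicFactors ε i p = p 1 ^ 3 + p 2 ^ 3 + p 3 ^ 3 - 3 * (p 1 * p 2 * p 3) := by
  simp only [Fin.prod_univ_three, cubicFactors, Matrix.cons_val_zero, Matrix.cons_val_one,
    Matrix.cons_val, linearForm_apply, one_mul]
  linear_combination ((ε - 1) * (p 2 ^ 3 + p 3 ^ 3) + p 1 ^ 2 * p 2 + p 1 ^ 2 * p 3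
    + ε * (p 1 * p 2 ^ 2 + p 1 * p 3 ^ 2) + ε ^ 2 * (p 2 ^ 2 * p 3 + p 2 * p 3 ^ 2)
    + (ε ^ 2 - ε + 3) * (p 1 * p 2 * p 3)) * hε.sq_add_self_add_one_s16

theorem eq_zero_of_cubicFactors_eq_zero (hε : IsPrimitiveRoot ε 3) {p : Fin 4 → K}
    (h0 : p 0 = 0) (h : ∀ i, cubicFactors ε i p = 0) : p = 0 := by
  have he := hε.sq_add_self_add_one_s16
  have hthree : (3 : K) ≠ 0 := by exact_mod_cast (hε.neZero' (n := 3)).out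
  have e1 : p 1 + 1 * p 2 + 1 * p 3 = 0 := h 0
  have e2 : p 1 + ε * p 2 + ε ^ 2 * p 3 = 0 := h 1
  have e3 : p 1 + ε ^ 2 * p 2 + ε * p 3 = 0 := h 2
  have h₁ : 3 * p 1 = 0 := by linear_combination e1 + e2 + e3 - (p 2 + p 3) * he
  have h₂ : 3 * p 2 = 0 := by
    linear_combination e1 + ε ^ 2 * e2 + ε * e3
      - (p 1 + 2 * (ε - 1) * p 2 + (ε ^ 2 - ε + 1) * p 3) * he
  have h₃ : 3 * p 3 = 0 := by
    linear_combination e1 + ε * e2 + ε ^ 2 * e3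
      - (p 1 + (ε ^ 2 - ε + 1) * p 2 + 2 * (ε - 1) * p 3) * he
  funext i
  fin_cases i
  · exact h0
  · exact (mul_eq_zero.mp h₁).resolve_left hthree
  · exact (mul_eq_zero.mp h₂).resolve_left hthree
  · exact (mul_eq_zero.mp h₃).resolve_left hthree

theorem apply_zero_eq_zero_of_subset_cubicSurface (hε : IsPrimitiveRoot ε 3)
    {L : Submodule K (Fin 4 → K)} (h2 : finrank K L = 2)
    (hL : (L : Set (Fin 4 → K)) ⊆ cubicSurface) :
    ∀ p ∈ L, p 0 = 0 := by
  obtain ⟨r, hrL, hr, hr0⟩ := L.exists_mem_ne_zero_apply_eq_zero (by omega) (proj 0)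
  obtain ⟨i, hi⟩ : ∃ i, cubicFactors ε i r ≠ 0 := by
    by_contra! h
    exact hr (eq_zero_of_cubicFactors_eq_zero hε hr0 h)
  intro p hp
  exact L.apply_eq_zero_of_prod_eq_pow three_ne_zero
    (fun v hv => by rw [prod_cubicFactors hε]; exact hL hv) hrL hr0 hi hp

theorem exists_eq_lineAtInfinity_of_subset_cubicSurface [Infinite K] (hε : IsPrimitiveRoot ε 3)
    {L : Submodule K (Fin 4 → K)} (h2 : finrank K L = 2)
    (hL : (L : Set (Fin 4 → K)) ⊆ cubicSurface) :
    ∃ i, L = lineAtInfinity (cubicFactors ε i) := by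
  have h0 := apply_zero_eq_zero_of_subset_cubicSurface hε h2 hL
  obtain ⟨i, hi⟩ := L.exists_le_ker_of_prod_eq_zero (f := cubicFactors ε) fun v hv => by
    rw [prod_cubicFactors hε, hL hv, h0 v hv, zero_pow three_ne_zero]
  refine ⟨i, Submodule.eq_of_le_of_finrank_eq (le_inf h0 hi) ?_⟩
  rw [h2]
  fin_cases i <;> exact (finrank_lineAtInfinity_linearForm _ _).symm

theorem lineAtInfinity_subset_cubicSurface (hε : IsPrimitiveRoot ε 3) (i : Fin 3) :
    (lineAtInfinity (cubicFactors ε i) : Set (Fin 4 → K)) ⊆ cubicSurface := by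
  rintro p ⟨h0, hi⟩
  change _ = _
  rw [← prod_cubicFactors hε, Finset.prod_eq_zero (Finset.mem_univ i) (mem_ker.mp hi),
    show p 0 = 0 from mem_ker.mp h0, zero_pow three_ne_zero]

end CubicSurface

theorem stmt_16 (ε : ℂ) (hε : IsPrimitiveRoot ε 3) :
    (∀ L : Submodule ℂ (Fin 4 → ℂ), Module.finrank ℂ L = 2 →
        (∀ p ∈ L, (p 1)^3 + (p 2)^3 + (p 3)^3 - 3 * (p 1 * p 2 * p 3) = (p 0)^3) →
        ∀ p ∈ L, p 0 = 0) ∧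
    (∀ L : Submodule ℂ (Fin 4 → ℂ), Module.finrank ℂ L = 2 →
        ((∀ p ∈ L, (p 1)^3 + (p 2)^3 + (p 3)^3 - 3 * (p 1 * p 2 * p 3) = (p 0)^3) ↔
          ((L : Set (Fin 4 → ℂ)) = {p | p 0 = 0 ∧ p 1 + p 2 + p 3 = 0} ∨
           (L : Set (Fin 4 → ℂ)) = {p | p 0 = 0 ∧ p 1 + ε * p 2 + ε^2 * p 3 = 0} ∨
           (L : Set (Fin 4 → ℂ)) = {p | p 0 = 0 ∧ p 1 + ε^2 * p 2 + ε * p 3 = 0}))) := by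
  refine ⟨fun L h2 hL => apply_zero_eq_zero_of_subset_cubicSurface hε h2 hL, fun L h2 => ?_⟩
  refine ⟨fun hL => ?_, fun hlines p hp => ?_⟩
  · obtain ⟨i, rfl⟩ := exists_eq_lineAtInfinity_of_subset_cubicSurface hε h2 hL
    fin_cases i <;> simp [cubicFactors, coe_lineAtInfinity_linearForm]
  · obtain ⟨i, rfl⟩ : ∃ i, L = lineAtInfinity (cubicFactors ε i) := by
      simpa [Fin.exists_fin_succ, cubicFactors, ← SetLike.coe_set_eq,
        coe_lineAtInfinity_linearForm] using hlines
    exact lineAtInfinity_subset_cubicSurface hε i hp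
end

section
/- For all rational numbers u ≠ 0 and r, the rational numbers x = u²/3 + (1/(3u))·(r² − 3)/(r² + 3) + (1/u)·2r/(r² + 3), y = u²/3 + (1/(3u))·(r² − 3)/(r² + 3) − (1/u)·2r/(r² + 3), z = u²/3 − (2/(3u))·(r² − 3)/(r² + 3) satisfy x³ + y³ + z³ − 3xyz = 1. -/
/-!
Write `x, y, z = a + p ± q, a - 2p`. Then `x + y + z = 3a` and
`x² + y² + z² - xy - yz - zx = 9p² + 3q²`, so the cubic norm form equals `9a(3p² + q²)`.
With `a = u²/3`, `p = c/(3u)`, `q = s/u` this is `c² + 3s²`, which is `1` for the rational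
parametrization `c = (r² - 3)/(r² + 3)`, `s = 2r/(r² + 3)` of the ellipse `c² + 3s² = 1`.
-/

theorem cube_add_cube_add_cube_sub_three_mul_of_eq {R : Type*} [CommRing R] {x y z a p q : R}
    (hx : x = a + p + q) (hy : y = a + p - q) (hz : z = a - 2 * p) :
    x ^ 3 + y ^ 3 + z ^ 3 - 3 * x * y * z = 9 * a * (3 * p ^ 2 + q ^ 2) := by
  subst hx hy hz
  ring

theorem sq_add_three_mul_sq_of_rational_param {K : Type*} [Field K] {r : K} (hr : r ^ 2 + 3 ≠ 0) :
    ((r ^ 2 - 3) / (r ^ 2 + 3)) ^ 2 + 3 * (2 * r / (r ^ 2 + 3)) ^ 2 = 1 := by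
  field_simp
  ring

theorem stmt_17 (u r : ℚ) (hu : u ≠ 0)
    (x y z : ℚ)
    (hx : x = u^2/3 + (1/(3*u)) * ((r^2 - 3)/(r^2 + 3)) + (1/u) * (2*r/(r^2 + 3)))
    (hy : y = u^2/3 + (1/(3*u)) * ((r^2 - 3)/(r^2 + 3)) - (1/u) * (2*r/(r^2 + 3)))
    (hz : z = u^2/3 - (2/(3*u)) * ((r^2 - 3)/(r^2 + 3))) :
    x^3 + y^3 + z^3 - 3*x*y*z = 1 := by
  have hr : r ^ 2 + 3 ≠ 0 := by positivity
  set c := (r ^ 2 - 3) / (r ^ 2 + 3)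
  set s := 2 * r / (r ^ 2 + 3)
  rw [cube_add_cube_add_cube_sub_three_mul_of_eq hx hy (hz.trans (by ring))]
  calc 9 * (u ^ 2 / 3) * (3 * (1 / (3 * u) * c) ^ 2 + (1 / u * s) ^ 2) = c ^ 2 + 3 * s ^ 2 := by
        field_simp
        ring
    _ = 1 := sq_add_three_mul_sq_of_rational_param hr
end

section
/- The set of rational points on the cubic surface x³ + y³ + z³ − 3xyz = 1, i.e., the set of triples (x,y,z) ∈ ℚ³ satisfying the equation, is infinite. -/
/-! The cubic form factors as `(x + y + z) * (x² + y² + z² - xy - yz - zx)`, and at `(a + t, a, a)`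
the second factor is `t²`. Choosing `a` with `3a + t = 1 / t²` therefore gives a rational point for
every `t ≠ 0`, and distinct `t` give distinct points because `t = x - y`. -/

theorem add_cube_add_cube_add_cube_sub_three_mul {R : Type*} [CommRing R] (x y z : R) :
    x ^ 3 + y ^ 3 + z ^ 3 - 3 * x * y * z =
      (x + y + z) * (x ^ 2 + y ^ 2 + z ^ 2 - x * y - y * z - z * x) := by
  ring

section DiagonalPoint

variable {K : Type*} [Field K]

def diagonalPoint (t : K) : K × K × K :=
  ((1 / t ^ 2 - t) / 3 + t, (1 / t ^ 2 - t) / 3, (1 / t ^ 2 - t) / 3)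

theorem diagonalPoint_injective : Function.Injective (diagonalPoint (K := K)) := by
  intro s t h
  simpa [diagonalPoint] using congrArg (fun p : K × K × K => p.1 - p.2.1) h

theorem diagonalPoint_cubic_eq_one (h3 : (3 : K) ≠ 0) {t : K} (ht : t ≠ 0) :
    let p := diagonalPoint t
    p.1 ^ 3 + p.2.1 ^ 3 + p.2.2 ^ 3 - 3 * p.1 * p.2.1 * p.2.2 = 1 := by
  set a := (1 / t ^ 2 - t) / 3 with ha
  have hsum : (a + t) + a + a = 1 / t ^ 2 := by
    rw [ha]; field_simp; ring
  have hquad : (a + t) ^ 2 + a ^ 2 + a ^ 2 - (a + t) * a - a * a - a * (a + t) = t ^ 2 := by ring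
  simp only [diagonalPoint]
  rw [add_cube_add_cube_add_cube_sub_three_mul, hsum, hquad]
  field_simp

end DiagonalPoint

theorem stmt_18 :
    {p : ℚ × ℚ × ℚ | p.1^3 + p.2.1^3 + p.2.2^3 - 3 * p.1 * p.2.1 * p.2.2 = 1}.Infinite := by
  refine Set.infinite_of_injective_forall_mem
    (f := fun n : ℕ => diagonalPoint ((n : ℚ) + 1)) ?_ fun n => ?_
  · exact diagonalPoint_injective.comp fun m n h => by simpa using h
  · exact diagonalPoint_cubic_eq_one three_ne_zero n.cast_add_one_ne_zero
end

section
/- The rational point (x, y, z) = (18/7, 16/7, 15/7) satisfies x³ + y³ + z³ − 3xyz = 1, but there are no rational numbers u ≠ 0 and r such that 18/7 = u²/3 + (1/(3u))·(r² − 3)/(r² + 3) + (1/u)·2r/(r² + 3), 16/7 = u²/3 + (1/(3u))·(r² − 3)/(r² + 3) − (1/u)·2r/(r² + 3), and 15/7 = u²/3 − (2/(3u))·(r² − 3)/(r² + 3). Hence the rational parametrization does not produce all rational points on the surface. -/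
/-!
Along the parametrization the `1/u` terms cancel in `x + y + z`, which is therefore `u²`.
The point `(18/7, 16/7, 15/7)` has coordinate sum `7`, which is not the square of a rational.
-/

theorem parametrization_coord_sum_eq_sq {K : Type*} [Field K] (h3 : (3 : K) ≠ 0) (u r : K) :
    (u^2/3 + (1/(3*u)) * ((r^2 - 3)/(r^2 + 3)) + (1/u) * (2*r/(r^2 + 3))) +
      (u^2/3 + (1/(3*u)) * ((r^2 - 3)/(r^2 + 3)) - (1/u) * (2*r/(r^2 + 3))) +
      (u^2/3 - (2/(3*u)) * ((r^2 - 3)/(r^2 + 3))) = u^2 := by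
  linear_combination div_mul_cancel₀ (u^2) h3

theorem stmt_19 :
    ((18/7 : ℚ)^3 + (16/7 : ℚ)^3 + (15/7 : ℚ)^3
        - 3 * (18/7 : ℚ) * (16/7 : ℚ) * (15/7 : ℚ) = 1) ∧
    ¬ ∃ u r : ℚ, u ≠ 0 ∧
        (18/7 : ℚ) = u^2/3 + (1/(3*u)) * ((r^2 - 3)/(r^2 + 3)) + (1/u) * (2*r/(r^2 + 3)) ∧
        (16/7 : ℚ) = u^2/3 + (1/(3*u)) * ((r^2 - 3)/(r^2 + 3)) - (1/u) * (2*r/(r^2 + 3)) ∧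
        (15/7 : ℚ) = u^2/3 - (2/(3*u)) * ((r^2 - 3)/(r^2 + 3)) := by
  refine ⟨by norm_num, ?_⟩
  rintro ⟨u, r, -, hx, hy, hz⟩
  have hsq : (7 : ℚ) = u * u := by
    linear_combination hx + hy + hz + parametrization_coord_sum_eq_sq (by norm_num) u r
  exact (by norm_num : ¬ IsSquare (7 : ℚ)) ⟨u, hsq⟩
end
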